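/- arXiv:2508.17144 — 4 statements merged into one kernel-verified Lean document; each statement's English description precedes it below -/
import Mathlib

section
/- For any finite list of real numbers y_1,...,y_n with empirical mean A = (1/n)∑ y_i, empirical variance V = (1/n)∑ (y_i - A)^2, maximum M = max_i y_i, and minimum m = min_i y_i, one has V ≤ (M - A)(A - m). -/
/-- Popoviciu-type inequality on the variance of a finite sample. -/
theorem popoviciu_variance (n : ℕ) (hn : 0 < n) (y : Fin n → ℝ) (A V M m : ℝ)
    (hA : A = (∑ i, y i) / n)
    (hV : V = (∑ i, (y i - A) ^ 2) / n)
    (hM : IsGreatest (Set.range y) M)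
    (hm : IsLeast (Set.range y) m) :
    V ≤ (M - A) * (A - m) := by
  have hnpos : (0 : ℝ) < n := by exact_mod_cast hn
  have hsum : ∑ i, y i = n * A := by
    rw [hA]; field_simp
  have hbound : ∀ i, (y i - A) ^ 2 ≤ (M + m) * y i - M * m - 2 * A * y i + A ^ 2 := by
    intro i
    have h1 : y i ≤ M := hM.2 ⟨i, rfl⟩
    have h2 : m ≤ y i := hm.2 ⟨i, rfl⟩
    nlinarith [mul_nonneg (sub_nonneg.2 h1) (sub_nonneg.2 h2)]
  have hS : ∑ i, (y i - A) ^ 2 ≤ ∑ i, ((M + m) * y i - M * m - 2 * A * y i + A ^ 2) :=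
    Finset.sum_le_sum fun i _ => hbound i
  have hS2 : ∑ i, ((M + m) * y i - M * m - 2 * A * y i + A ^ 2)
      = (M + m) * (n * A) - n * (M * m) - 2 * A * (n * A) + n * A ^ 2 := by
    simp [Finset.sum_sub_distrib, Finset.sum_add_distrib, ← Finset.mul_sum, hsum, Finset.sum_const,
      Finset.card_univ]
  rw [hV, div_le_iff₀ hnpos]
  calc ∑ i, (y i - A) ^ 2 ≤ (M + m) * (n * A) - n * (M * m) - 2 * A * (n * A) + n * A ^ 2 := by rw [← hS2]; exact hS
    _ = (M - A) * (A - m) * n := by ring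
end

section
/- Let f_1,...,f_n : ℝ^d → ℝ each be convex and differentiable, with f_i being L_i-smooth (gradient L_i-Lipschitz), and set f = (1/n)∑ f_i and L_max = max_i L_i. Let x* be a minimizer of f. Then for all x, (1/n)∑_i ‖∇f_i(x)‖² ≤ 4 L_max (f(x) - f(x*)) + 2·(1/n)∑_i ‖∇f_i(x*)‖². -/
/-!
Write `D_i(x, y) = f_i x - f_i y - ⟪∇f_i y, x - y⟫`, which is nonnegative by convexity.
For a convex `f_i` with `L_i`-Lipschitz gradient, evaluating `f_i` at the gradient step
`x - L_i⁻¹ (∇f_i x - ∇f_i y)` gives the co-coercivity bound `‖∇f_i x - ∇f_i y‖² ≤ 2 L_i D_i(x, y)`,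
and hence `‖∇f_i x‖² ≤ 4 L_max D_i(x, x*) + 2 ‖∇f_i x*‖²`. Summing over `i`, the linear terms
`⟪∇f_i x*, x - x*⟫` cancel because `x*` is a critical point of `∑ f_i`, so `∑ D_i(x, x*)` is
`n (f x - f x*)`.
-/

open scoped RealInnerProductSpace

section

variable {E : Type*} [NormedAddCommGroup E] [InnerProductSpace ℝ E] [CompleteSpace E]
  {f : E → ℝ} {g x v : E}

theorem HasGradientAt.hasDerivAt_comp_add_smul {t : ℝ} (hf : HasGradientAt f g (x + t • v)) :
    HasDerivAt (fun s : ℝ => f (x + s • v)) ⟪g, v⟫ t := by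
  have hline : HasDerivAt (fun s : ℝ => x + s • v) v t := by
    simpa using ((hasDerivAt_id t).smul_const v).const_add x
  simpa [Function.comp_def] using hf.hasFDerivAt.comp_hasDerivAt t hline

theorem ConvexOn.add_inner_sub_le_of_hasGradientAt {s : Set E} {y : E} (hconv : ConvexOn ℝ s f)
    (hx : x ∈ s) (hy : y ∈ s) (hf : HasGradientAt f g x) :
    f x + ⟪g, y - x⟫ ≤ f y := by
  have hline := hconv.comp_affineMap (AffineMap.lineMap x y)
  have hcomp : f ∘ AffineMap.lineMap x y = fun t : ℝ => f (x + t • (y - x)) := by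
    ext t; simp [AffineMap.lineMap_apply_module', add_comm]
  rw [hcomp] at hline
  have hderiv : HasDerivAt (fun t : ℝ => f (x + t • (y - x))) ⟪g, y - x⟫ 0 :=
    HasGradientAt.hasDerivAt_comp_add_smul (by simpa using hf)
  have := hline.le_slope_of_hasDerivAt (by simpa using hx) (by simpa using hy) one_pos hderiv
  simp [slope_def_field] at this
  linarith

theorem Differentiable.le_add_inner_gradient_add_sq {ℓ : ℝ} (hf : Differentiable ℝ f)
    (hlip : ∀ z w, ‖gradient f z - gradient f w‖ ≤ ℓ * ‖z - w‖) (x y : E) :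
    f y ≤ f x + ⟪gradient f x, y - x⟫ + ℓ / 2 * ‖y - x‖ ^ 2 := by
  set v := y - x
  set φ : ℝ → ℝ := fun t => f (x + t • v) - t * ⟪gradient f x, v⟫ - ℓ / 2 * t ^ 2 * ‖v‖ ^ 2
  have hφ : ∀ t, HasDerivAt φ
      (⟪gradient f (x + t • v), v⟫ - ⟪gradient f x, v⟫ - ℓ * t * ‖v‖ ^ 2) t := by
    intro t
    have hline : HasDerivAt (fun s : ℝ => f (x + s • v)) ⟪gradient f (x + t • v), v⟫ t :=
      (hf _).hasGradientAt.hasDerivAt_comp_add_smul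
    exact ((hline.sub ((hasDerivAt_id t).mul_const _)).sub
      (((hasDerivAt_pow 2 t).const_mul (ℓ / 2)).mul_const (‖v‖ ^ 2))).congr_deriv
      (by push_cast; ring)
  have hφ' : ∀ t ∈ interior (Set.Icc (0 : ℝ) 1),
      ⟪gradient f (x + t • v), v⟫ - ⟪gradient f x, v⟫ - ℓ * t * ‖v‖ ^ 2 ≤ 0 := by
    intro t ht
    rw [interior_Icc] at ht
    have hgrad := hlip (x + t • v) x
    rw [add_sub_cancel_left, norm_smul, Real.norm_of_nonneg ht.1.le] at hgrad
    rw [sub_nonpos]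
    calc ⟪gradient f (x + t • v), v⟫ - ⟪gradient f x, v⟫
        = ⟪gradient f (x + t • v) - gradient f x, v⟫ := (inner_sub_left _ _ _).symm
      _ ≤ ‖gradient f (x + t • v) - gradient f x‖ * ‖v‖ := real_inner_le_norm _ _
      _ ≤ ℓ * (t * ‖v‖) * ‖v‖ := by gcongr
      _ = ℓ * t * ‖v‖ ^ 2 := by ring
  have hanti := antitoneOn_of_hasDerivWithinAt_nonpos (convex_Icc 0 1)
    (HasDerivAt.continuousOn fun t _ => hφ t) (fun t _ => (hφ t).hasDerivWithinAt) hφ'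
  have := hanti (Set.left_mem_Icc.2 zero_le_one) (Set.right_mem_Icc.2 zero_le_one) zero_le_one
  simp only [φ, v, zero_smul, add_zero, one_smul, add_sub_cancel, zero_mul, sub_zero, one_mul,
    one_pow] at this
  linarith

theorem ConvexOn.norm_gradient_sub_sq_le {ℓ : ℝ} (hconv : ConvexOn ℝ Set.univ f)
    (hf : Differentiable ℝ f) (hlip : ∀ z w, ‖gradient f z - gradient f w‖ ≤ ℓ * ‖z - w‖)
    (x y : E) :
    ‖gradient f x - gradient f y‖ ^ 2 ≤ 2 * ℓ * (f x - f y - ⟪gradient f y, x - y⟫) := by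
  have hbregman :=
    hconv.add_inner_sub_le_of_hasGradientAt (Set.mem_univ y) (Set.mem_univ x) (hf y).hasGradientAt
  rcases le_or_gt ℓ 0 with hℓ | hℓ
  · have hu : gradient f x - gradient f y = 0 :=
      norm_le_zero_iff.mp ((hlip x y).trans (mul_nonpos_of_nonpos_of_nonneg hℓ (norm_nonneg _)))
    have hdescent := hf.le_add_inner_gradient_add_sq hlip y x
    have : ℓ / 2 * ‖x - y‖ ^ 2 ≤ 0 := mul_nonpos_of_nonpos_of_nonneg (by linarith) (by positivity)
    have hD : f x - f y - ⟪gradient f y, x - y⟫ = 0 := by linarith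
    rw [hu, hD, norm_zero]
    simp
  -- Bound `f z` from below by convexity at `y` and from above by smoothness at `x`.
  set u := gradient f x - gradient f y
  set z := x - ℓ⁻¹ • u
  have hlower :=
    hconv.add_inner_sub_le_of_hasGradientAt (Set.mem_univ y) (Set.mem_univ z) (hf y).hasGradientAt
  have hupper := hf.le_add_inner_gradient_add_sq hlip x z
  have hzy : z - y = (x - y) - ℓ⁻¹ • u := by simp only [z]; abel
  have hzx : z - x = -(ℓ⁻¹ • u) := by simp only [z]; abel
  rw [hzy, inner_sub_right, real_inner_smul_right] at hlower
  rw [hzx, inner_neg_right, real_inner_smul_right, norm_neg, norm_smul, Real.norm_of_nonneg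
    (inv_nonneg.2 hℓ.le)] at hupper
  have hu : ⟪gradient f x, u⟫ - ⟪gradient f y, u⟫ = ‖u‖ ^ 2 := by
    rw [← inner_sub_left, real_inner_self_eq_norm_sq]
  have key : ‖u‖ ^ 2 / (2 * ℓ) ≤ f x - f y - ⟪gradient f y, x - y⟫ := by
    have : ℓ / 2 * (ℓ⁻¹ * ‖u‖) ^ 2 = ℓ⁻¹ * ‖u‖ ^ 2 / 2 := by field_simp
    have : ‖u‖ ^ 2 / (2 * ℓ) = ℓ⁻¹ * ‖u‖ ^ 2 / 2 := by field_simp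
    nlinarith
  rwa [div_le_iff₀ (by positivity), mul_comm] at key

theorem ConvexOn.norm_gradient_sq_le {ℓ L : ℝ} (hconv : ConvexOn ℝ Set.univ f)
    (hf : Differentiable ℝ f) (hlip : ∀ z w, ‖gradient f z - gradient f w‖ ≤ ℓ * ‖z - w‖)
    (hℓL : ℓ ≤ L) (x y : E) :
    ‖gradient f x‖ ^ 2 ≤ 4 * L * (f x - f y - ⟪gradient f y, x - y⟫) + 2 * ‖gradient f y‖ ^ 2 := by
  have hD :=
    hconv.add_inner_sub_le_of_hasGradientAt (Set.mem_univ y) (Set.mem_univ x) (hf y).hasGradientAt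
  have hcoco := hconv.norm_gradient_sub_sq_le hf hlip x y
  have hpar := parallelogram_law_with_norm ℝ (gradient f x - gradient f y) (gradient f y)
  rw [sub_add_cancel] at hpar
  nlinarith [mul_le_mul_of_nonneg_right hℓL (by linarith : 0 ≤ f x - f y - ⟪gradient f y, x - y⟫),
    sq_nonneg ‖gradient f x - gradient f y - gradient f y‖]

theorem HasGradientAt.sum {ι : Type*} {u : Finset ι} {A : ι → E → ℝ} {A' : ι → E}
    (h : ∀ i ∈ u, HasGradientAt (A i) (A' i) x) :
    HasGradientAt (fun y => ∑ i ∈ u, A i y) (∑ i ∈ u, A' i) x := by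
  rw [hasGradientAt_iff_hasFDerivAt, map_sum]
  exact HasFDerivAt.fun_sum fun i hi => (h i hi).hasFDerivAt

theorem IsLocalMin.hasGradientAt_eq_zero (hmin : IsLocalMin f x) (hf : HasGradientAt f g x) :
    g = 0 :=
  (InnerProductSpace.toDual ℝ E).map_eq_zero_iff.1 (hmin.hasFDerivAt_eq_zero hf.hasFDerivAt)

theorem sum_norm_gradient_sq_le {ι : Type*} [Fintype ι] {f : ι → E → ℝ} {ℓ : ι → ℝ} {L : ℝ}
    (hconv : ∀ i, ConvexOn ℝ Set.univ (f i)) (hf : ∀ i, Differentiable ℝ (f i))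
    (hlip : ∀ i z w, ‖gradient (f i) z - gradient (f i) w‖ ≤ ℓ i * ‖z - w‖) (hℓL : ∀ i, ℓ i ≤ L)
    {xstar : E} (hmin : IsLocalMin (fun y => ∑ i, f i y) xstar) (x : E) :
    ∑ i, ‖gradient (f i) x‖ ^ 2 ≤
      4 * L * (∑ i, f i x - ∑ i, f i xstar) + 2 * ∑ i, ‖gradient (f i) xstar‖ ^ 2 := by
  have hcrit : ∑ i, gradient (f i) xstar = 0 :=
    hmin.hasGradientAt_eq_zero (HasGradientAt.sum fun i _ => (hf i xstar).hasGradientAt)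
  calc ∑ i, ‖gradient (f i) x‖ ^ 2
      ≤ ∑ i, (4 * L * (f i x - f i xstar - ⟪gradient (f i) xstar, x - xstar⟫)
          + 2 * ‖gradient (f i) xstar‖ ^ 2) :=
        Finset.sum_le_sum fun i _ => (hconv i).norm_gradient_sq_le (hf i) (hlip i) (hℓL i) x xstar
    _ = 4 * L * (∑ i, f i x - ∑ i, f i xstar - ⟪∑ i, gradient (f i) xstar, x - xstar⟫)
          + 2 * ∑ i, ‖gradient (f i) xstar‖ ^ 2 := by
        rw [Finset.sum_add_distrib, ← Finset.mul_sum, ← Finset.mul_sum, Finset.sum_sub_distrib,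
          Finset.sum_sub_distrib, sum_inner]
    _ = 4 * L * (∑ i, f i x - ∑ i, f i xstar) + 2 * ∑ i, ‖gradient (f i) xstar‖ ^ 2 := by
        rw [hcrit, inner_zero_left, sub_zero]

end

/-- Variance transfer lemma. -/
theorem variance_transfer (d n : ℕ) (hn : 0 < n)
    (f : Fin n → EuclideanSpace ℝ (Fin d) → ℝ) (L : Fin n → ℝ) (Lmax : ℝ)
    (hconv : ∀ i, ConvexOn ℝ Set.univ (f i))
    (hdiff : ∀ i, Differentiable ℝ (f i))
    (hlip : ∀ i x y, ‖gradient (f i) x - gradient (f i) y‖ ≤ L i * ‖x - y‖)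
    (hLmax : IsGreatest (Set.range L) Lmax)
    (F : EuclideanSpace ℝ (Fin d) → ℝ) (hF : ∀ x, F x = (∑ i, f i x) / n)
    (xstar : EuclideanSpace ℝ (Fin d)) (hmin : ∀ y, F xstar ≤ F y)
    (x : EuclideanSpace ℝ (Fin d)) :
    (∑ i, ‖gradient (f i) x‖ ^ 2) / n ≤
      4 * Lmax * (F x - F xstar) + 2 * ((∑ i, ‖gradient (f i) xstar‖ ^ 2) / n) := by
  have hn' : (0 : ℝ) < n := by exact_mod_cast hn
  have hsum_min : IsLocalMin (fun y => ∑ i, f i y) xstar :=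
    Filter.Eventually.of_forall fun y => by
      simpa only [hF, div_le_div_iff_of_pos_right hn'] using hmin y
  have hsum := sum_norm_gradient_sq_le hconv hdiff hlip (fun i => hLmax.2 ⟨i, rfl⟩) hsum_min x
  rw [hF, hF, div_le_iff₀ hn']
  refine hsum.trans_eq ?_
  field_simp
end

section
/- Let f_i : ℝ^d → ℝ be L_i-smooth for each i, let x_t = x_{t−1} − α∇f_{i_{t−1}}(x_{t−1}) with 0 < α < 1/L_{i_{t−1}}. Then for any index j, ‖∇f_j(x_{t−1})‖ ≤ ‖∇f_j(x_t)‖ + (αL_j/(1 − αL_{i_{t−1}})) ‖∇f_{i_{t−1}}(x_t)‖. -/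
/-- Gradient stability of another component along one stochastic gradient step. -/
theorem grad_other_prev_le (d : ℕ) (Li Lj α : ℝ) (hLi : 0 < Li) (hLj : 0 < Lj)
    (fi fj : EuclideanSpace ℝ (Fin d) → ℝ)
    (hdiffi : Differentiable ℝ fi) (hdiffj : Differentiable ℝ fj)
    (hlipi : ∀ x y, ‖gradient fi x - gradient fi y‖ ≤ Li * ‖x - y‖)
    (hlipj : ∀ x y, ‖gradient fj x - gradient fj y‖ ≤ Lj * ‖x - y‖)
    (hα : 0 < α) (hαL : α < 1 / Li)
    (xprev xnext : EuclideanSpace ℝ (Fin d))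
    (hupd : xnext = xprev - α • gradient fi xprev) :
    ‖gradient fj xprev‖ ≤
      ‖gradient fj xnext‖ + (α * Lj / (1 - α * Li)) * ‖gradient fi xnext‖ := by
  have hdiff : xprev - xnext = α • gradient fi xprev := by
    rw [hupd]; abel
  have hdist : ‖xprev - xnext‖ = α * ‖gradient fi xprev‖ := by
    rw [hdiff, norm_smul, Real.norm_eq_abs, abs_of_pos hα]
  have hpos : 0 < 1 - α * Li := by
    have := (lt_div_iff₀ hLi).mp hαL
    linarith
  -- bound on ‖∇fi xprev‖
  have hi : ‖gradient fi xprev‖ ≤ ‖gradient fi xnext‖ / (1 - α * Li) := by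
    have h1 : ‖gradient fi xprev‖ ≤ ‖gradient fi xnext‖ + Li * ‖xprev - xnext‖ := by
      calc ‖gradient fi xprev‖
          ≤ ‖gradient fi xnext‖ + ‖gradient fi xprev - gradient fi xnext‖ := by
            have := norm_sub_norm_le (gradient fi xprev) (gradient fi xnext)
            linarith [norm_sub_norm_le (gradient fi xprev) (gradient fi xnext)]
        _ ≤ ‖gradient fi xnext‖ + Li * ‖xprev - xnext‖ := by
            linarith [hlipi xprev xnext]
    rw [hdist] at h1
    rw [le_div_iff₀ hpos]
    nlinarith
  have hj : ‖gradient fj xprev‖ ≤ ‖gradient fj xnext‖ + Lj * (α * ‖gradient fi xprev‖) := by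
    calc ‖gradient fj xprev‖
        ≤ ‖gradient fj xnext‖ + ‖gradient fj xprev - gradient fj xnext‖ := by
          linarith [norm_sub_norm_le (gradient fj xprev) (gradient fj xnext)]
      _ ≤ ‖gradient fj xnext‖ + Lj * ‖xprev - xnext‖ := by linarith [hlipj xprev xnext]
      _ = ‖gradient fj xnext‖ + Lj * (α * ‖gradient fi xprev‖) := by rw [hdist]
  have key : Lj * (α * ‖gradient fi xprev‖) ≤
      (α * Lj / (1 - α * Li)) * ‖gradient fi xnext‖ := by
    rw [div_mul_eq_mul_div, le_div_iff₀ hpos]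
    nlinarith [hi, mul_le_mul_of_nonneg_left ((le_div_iff₀ hpos).mp hi)
      (le_of_lt (mul_pos hα hLj))]
  linarith
end

section
/- Let L_max > 0 and 0 < α < 1/L_max, and consider iterates x_{s+1} = x_s − α∇f_{i_s}(x_s) where each f_i is L_i-smooth with L_i ≤ L_max. Then for any t ≥ k ≥ 1, ‖x_{t−k} − x_t‖ ≤ (α/(1 − αL_max)) · (1/(1 − αL_max))^{k−1} · ∑_{l=1}^{k} ‖∇f_{i_{t−l}}(x_t)‖. -/
/-!
Put `θ = 1 - α Lmax`. Writing `x_s - x_t = (x_{s+1} - x_t) + α ∇f_{i_s}(x_s)` and comparing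
`∇f_{i_s}(x_s)` with `∇f_{i_s}(x_t)` by smoothness gives `θ D_{m+1} ≤ D_m + α ‖∇f_{i_{t-m-1}}(x_t)‖`
for `D_m = ‖x_{t-m} - x_t‖`. Unrolling this recurrence from `D_0 = 0` (a discrete Grönwall
argument) gives `D_k ≤ α θ^{-k} ∑_{l=1}^{k} ‖∇f_{i_{t-l}}(x_t)‖`.
-/

open Finset

theorem le_mul_inv_pow_mul_sum_of_mul_succ_le {D a : ℕ → ℝ} {α θ : ℝ} (hα : 0 ≤ α)
    (hθ : 0 < θ) (hθ1 : θ ≤ 1) (ha : ∀ l, 0 ≤ a l) (hD0 : D 0 = 0)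
    (hstep : ∀ m, θ * D (m + 1) ≤ D m + α * a (m + 1)) (m : ℕ) :
    D m ≤ α * θ⁻¹ ^ m * ∑ l ∈ Icc 1 m, a l := by
  induction m with
  | zero => simp [hD0]
  | succ m ih =>
    have hρ : 1 ≤ θ⁻¹ := one_le_inv₀ hθ |>.mpr hθ1
    have hρm : 1 ≤ θ⁻¹ ^ m := one_le_pow₀ hρ
    have hD : D (m + 1) ≤ θ⁻¹ * (D m + α * a (m + 1)) := by
      rw [← div_eq_inv_mul, le_div_iff₀' hθ]
      exact hstep m
    have hαa : 0 ≤ α * a (m + 1) := mul_nonneg hα (ha _)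
    calc D (m + 1)
        ≤ θ⁻¹ * (D m + α * a (m + 1)) := hD
      _ ≤ θ⁻¹ * (α * θ⁻¹ ^ m * ∑ l ∈ Icc 1 m, a l + θ⁻¹ ^ m * (α * a (m + 1))) := by
          have := le_mul_of_one_le_left hαa hρm
          gcongr
      _ = α * θ⁻¹ ^ (m + 1) * ∑ l ∈ Icc 1 (m + 1), a l := by
          rw [sum_Icc_succ_top (by omega), pow_succ]
          ring

section Step

variable {E : Type*} [NormedAddCommGroup E] [NormedSpace ℝ E]

theorem one_sub_mul_norm_sub_le_of_step {G : E → E} {α L : ℝ} (hα : 0 ≤ α) {u y : E}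
    (hG : ‖G u - G y‖ ≤ L * ‖u - y‖) :
    (1 - α * L) * ‖u - y‖ ≤ ‖u - α • G u - y‖ + α * ‖G y‖ := by
  have hsplit : u - y = (u - α • G u - y) + α • G u := by abel
  have hGu : ‖G u‖ ≤ ‖G y‖ + L * ‖u - y‖ := by
    linarith [norm_sub_norm_le (G u) (G y)]
  have htri : ‖u - y‖ ≤ ‖u - α • G u - y‖ + α * ‖G u‖ := by
    calc ‖u - y‖ = ‖(u - α • G u - y) + α • G u‖ := by rw [← hsplit]
      _ ≤ ‖u - α • G u - y‖ + α * ‖G u‖ :=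
          (norm_add_le _ _).trans_eq (by rw [norm_smul, Real.norm_of_nonneg hα])
  linarith [mul_le_mul_of_nonneg_left hGu hα]

/-- Past the start of the sequence the truncated index `t - m` stays at `0`, where the
recurrence holds because `1 - α L ≤ 1`. -/
theorem one_sub_mul_norm_iterate_sub_le {G : ℕ → E → E} {x : ℕ → E} {α L : ℝ} (hα : 0 ≤ α)
    (hαL : 0 ≤ α * L) (hG : ∀ s u v, ‖G s u - G s v‖ ≤ L * ‖u - v‖)
    (hupd : ∀ s, x (s + 1) = x s - α • G s (x s)) (t m : ℕ) :
    (1 - α * L) * ‖x (t - (m + 1)) - x t‖ ≤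
      ‖x (t - m) - x t‖ + α * ‖G (t - (m + 1)) (x t)‖ := by
  rcases lt_or_ge m t with hmt | htm
  · have hs : t - m = t - (m + 1) + 1 := by omega
    rw [hs, hupd]
    exact one_sub_mul_norm_sub_le_of_step hα (hG _ _ _)
  · have hs : t - (m + 1) = t - m := by omega
    rw [hs]
    linarith [mul_nonneg hαL (norm_nonneg (x (t - m) - x t)),
      mul_nonneg hα (norm_nonneg (G (t - m) (x t)))]

end Step

theorem iterate_drift_bound_general (d n : ℕ) (Lmax α : ℝ)
    (hα : 0 < α) (hα2 : α < 1 / Lmax)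
    (f : Fin n → EuclideanSpace ℝ (Fin d) → ℝ) (L : Fin n → ℝ)
    (hlip : ∀ i x y, ‖gradient (f i) x - gradient (f i) y‖ ≤ L i * ‖x - y‖)
    (hLle : ∀ i, L i ≤ Lmax)
    (x : ℕ → EuclideanSpace ℝ (Fin d)) (idx : ℕ → Fin n)
    (hupd : ∀ s, x (s + 1) = x s - α • gradient (f (idx s)) (x s))
    (t k : ℕ) :
    ‖x (t - k) - x t‖ ≤
      (α / (1 - α * Lmax)) * (1 / (1 - α * Lmax)) ^ (k - 1) *
        ∑ l ∈ Finset.Icc 1 k, ‖gradient (f (idx (t - l))) (x t)‖ := by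
  have hLmax : 0 < Lmax := one_div_pos.mp (hα.trans hα2)
  have hαL : α * Lmax < 1 := (lt_div_iff₀ hLmax).mp hα2
  have hαL0 : 0 ≤ α * Lmax := (mul_pos hα hLmax).le
  have hθ : 0 < 1 - α * Lmax := by linarith
  have hθ1 : 1 - α * Lmax ≤ 1 := by linarith
  have hG : ∀ s u v, ‖gradient (f (idx s)) u - gradient (f (idx s)) v‖ ≤ Lmax * ‖u - v‖ :=
    fun s u v => (hlip _ u v).trans (by gcongr; exact hLle _)
  have hdrift := le_mul_inv_pow_mul_sum_of_mul_succ_le (D := fun m => ‖x (t - m) - x t‖)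
    (a := fun l => ‖gradient (f (idx (t - l))) (x t)‖) hα.le hθ hθ1 (fun _ => norm_nonneg _)
    (by simp) (one_sub_mul_norm_iterate_sub_le hα.le hαL0 hG hupd t) k
  have hpow : (1 - α * Lmax)⁻¹ ^ k ≤ (1 - α * Lmax)⁻¹ * (1 - α * Lmax)⁻¹ ^ (k - 1) := by
    rw [← pow_succ']
    exact pow_le_pow_right₀ (one_le_inv₀ hθ |>.mpr hθ1) (by omega)
  refine hdrift.trans (mul_le_mul_of_nonneg_right ?_ (sum_nonneg fun _ _ => norm_nonneg _))
  rw [div_eq_mul_inv, one_div, mul_assoc]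
  exact mul_le_mul_of_nonneg_left hpow hα.le

/-- Drift bound for past iterates of SGD-type updates (Corollary 1). -/
theorem iterate_drift_bound (d n : ℕ) (Lmax α : ℝ) (hLmax : 0 < Lmax)
    (hα : 0 < α) (hα2 : α < 1 / Lmax)
    (f : Fin n → EuclideanSpace ℝ (Fin d) → ℝ) (L : Fin n → ℝ)
    (hdiff : ∀ i, Differentiable ℝ (f i))
    (hlip : ∀ i x y, ‖gradient (f i) x - gradient (f i) y‖ ≤ L i * ‖x - y‖)
    (hLle : ∀ i, L i ≤ Lmax)
    (x : ℕ → EuclideanSpace ℝ (Fin d)) (idx : ℕ → Fin n)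
    (hupd : ∀ s, x (s + 1) = x s - α • gradient (f (idx s)) (x s))
    (t k : ℕ) (hk : 1 ≤ k) (hkt : k ≤ t) :
    ‖x (t - k) - x t‖ ≤
      (α / (1 - α * Lmax)) * (1 / (1 - α * Lmax)) ^ (k - 1) *
        ∑ l ∈ Finset.Icc 1 k, ‖gradient (f (idx (t - l))) (x t)‖ :=
  iterate_drift_bound_general d n Lmax α hα hα2 f L hlip hLle x idx hupd t k
end
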